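/- arXiv:1408.2842 — 4 statements merged into one kernel-verified Lean document; each statement's English description precedes it below -/
import Mathlib

section
/- Let M be a monoid and c ∈ M. On the set cM ∩ Mc, the operation ∘ defined by (xc) ∘ (cy) = xcy is well-defined (i.e., if x'c = xc and cy' = cy then x'cy' = xcy) and associative, and c is a neutral element for ∘. Hence M_c = (cM ∩ Mc, ∘, c) is a monoid. -/
/-! Every product in the local divisor is computed from a left factorization: if `z₁ = x * c`
then `z₁ ∘ z₂ = x * z₂` in `M`, whichever `x` was chosen, because `z₂ ∈ cM`. Associativity and
neutrality of `c` then reduce to associativity in `M`. -/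

variable {M : Type*} [Monoid M]

/-- The underlying set `cM ∩ Mc` of the local divisor of `M` at `c`. -/
def LD (M : Type*) [Monoid M] (c : M) : Set M :=
  {z | (∃ y, z = c * y) ∧ (∃ x, z = x * c)}

namespace LD

variable {c : M}

/-- The multiplication `(xc) ∘ (cy) = xcy` of the local divisor at `c`,
defined via a choice of `x` with `z₁ = x * c`. -/
noncomputable def mul (z₁ z₂ : LD M c) : LD M c := by
  refine ⟨z₁.2.2.choose * (z₂ : M), ?_, ?_⟩
  · obtain ⟨y₁, hy₁⟩ := z₁.2.1
    obtain ⟨y₂, hy₂⟩ := z₂.2.1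
    refine ⟨y₁ * y₂, ?_⟩
    calc z₁.2.2.choose * (z₂ : M) = z₁.2.2.choose * (c * y₂) := by rw [← hy₂]
      _ = z₁.2.2.choose * c * y₂ := (mul_assoc _ _ _).symm
      _ = (z₁ : M) * y₂ := by rw [← z₁.2.2.choose_spec]
      _ = c * y₁ * y₂ := by rw [hy₁]
      _ = c * (y₁ * y₂) := mul_assoc _ _ _
  · obtain ⟨x₂, hx₂⟩ := z₂.2.2
    exact ⟨z₁.2.2.choose * x₂, by rw [hx₂, mul_assoc]⟩

noncomputable instance : Mul (LD M c) := ⟨mul⟩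

instance : One (LD M c) := ⟨⟨c, ⟨1, (mul_one c).symm⟩, ⟨1, (one_mul c).symm⟩⟩⟩

end LD

theorem mul_mul_eq_of_mul_eq_of_mul_eq {S : Type*} [Semigroup S] {c x x' y y' : S}
    (hx : x * c = x' * c) (hy : c * y = c * y') : x * c * y = x' * c * y' := by
  rw [mul_assoc, hy, ← mul_assoc, hx]

namespace LD

variable {c : M}

theorem coe_one : ((1 : LD M c) : M) = c := rfl

theorem coe_mul_of_eq_mul_left {z₁ : LD M c} {x : M} (hx : (z₁ : M) = x * c) (z₂ : LD M c) :
    ((z₁ * z₂ : LD M c) : M) = x * z₂ := by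
  obtain ⟨y, hy⟩ := z₂.2.1
  change z₁.2.2.choose * (z₂ : M) = x * z₂
  rw [hy, ← mul_assoc, ← mul_assoc]
  exact mul_mul_eq_of_mul_eq_of_mul_eq (z₁.2.2.choose_spec.symm.trans hx) rfl

protected theorem mul_assoc (z₁ z₂ z₃ : LD M c) : z₁ * z₂ * z₃ = z₁ * (z₂ * z₃) := by
  obtain ⟨x₁, hx₁⟩ := z₁.2.2
  obtain ⟨x₂, hx₂⟩ := z₂.2.2
  have h₁₂ : ((z₁ * z₂ : LD M c) : M) = x₁ * x₂ * c := by
    rw [coe_mul_of_eq_mul_left hx₁, hx₂, mul_assoc]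
  apply Subtype.ext
  rw [coe_mul_of_eq_mul_left h₁₂, coe_mul_of_eq_mul_left hx₁, coe_mul_of_eq_mul_left hx₂,
    mul_assoc]

protected theorem one_mul (z : LD M c) : 1 * z = z :=
  Subtype.ext <| (coe_mul_of_eq_mul_left (one_mul c).symm z).trans (one_mul _)

protected theorem mul_one (z : LD M c) : z * 1 = z := by
  obtain ⟨x, hx⟩ := z.2.2
  apply Subtype.ext
  rw [coe_mul_of_eq_mul_left hx, coe_one, ← hx]

end LD

/-- On `cM ∩ Mc`, the operation `(xc) ∘ (cy) = xcy` is well defined, associative, and has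
`c` as a neutral element; hence `M_c = (cM ∩ Mc, ∘, c)` is a monoid. -/
theorem localDivisor_isMonoid (c : M) :
    -- well-definedness of `(xc) ∘ (cy) = xcy` on the underlying elements of `M`:
    (∀ x x' y y' : M, x * c = x' * c → c * y = c * y' → x * c * y = x' * c * y') ∧
    -- the operation `∘` indeed satisfies `(xc) ∘ (cy) = xcy`:
    (∀ z₁ z₂ : LD M c, ∀ x y : M, (z₁ : M) = x * c → (z₂ : M) = c * y →
      ((z₁ * z₂ : LD M c) : M) = x * c * y) ∧
    -- `∘` is associative:
    (∀ z₁ z₂ z₃ : LD M c, z₁ * z₂ * z₃ = z₁ * (z₂ * z₃)) ∧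
    -- `c` is a neutral element for `∘`:
    (((1 : LD M c) : M) = c ∧ ∀ z : LD M c, 1 * z = z ∧ z * 1 = z) := by
  refine ⟨fun _ _ _ _ => mul_mul_eq_of_mul_eq_of_mul_eq, fun z₁ z₂ x y hx hy => ?_,
    LD.mul_assoc, LD.coe_one, fun z => ⟨LD.one_mul z, LD.mul_one z⟩⟩
  rw [LD.coe_mul_of_eq_mul_left hx, hy, mul_assoc]
end

section
/- Let A be a finite alphabet, let φ : A* → M be a monoid homomorphism, let c ∈ A, let B = A \ {c}, and let φ_c : B* → M be the restriction of φ to B*. Then for every p ∈ M: φ^{-1}(p) = φ_c^{-1}(p) ∪ ⋃_{p = p₁p₂p₃} φ_c^{-1}(p₁) · (φ^{-1}(p₂) ∩ cA* ∩ A*c) · φ_c^{-1}(p₃), where the union is over all factorizations p = p₁p₂p₃ in M, languages over B are viewed as languages over A, and cA* (resp. A*c) denotes the set of words over A beginning (resp. ending) with the letter c. -/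
/-- Concatenation of languages: `K · K' = {uv : u ∈ K, v ∈ K'}`. -/
def Lang.cat {α : Type*} (K K' : Set (FreeMonoid α)) : Set (FreeMonoid α) :=
  {w | ∃ u ∈ K, ∃ v ∈ K', w = u * v}

theorem Lang.mul_mem_cat {α : Type*} {K K' : Set (FreeMonoid α)} {u v : FreeMonoid α}
    (hu : u ∈ K) (hv : v ∈ K') : u * v ∈ Lang.cat K K' :=
  ⟨u, hu, v, hv, rfl⟩

namespace FreeMonoid

variable {α : Type*} {c : α}

theorem exists_eq_mul_of_mul_notMem_left {w : FreeMonoid α} (h : c ∈ w) :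
    ∃ u t, w = u * of c * t ∧ c ∉ u := by
  induction w using FreeMonoid.inductionOn' with
  | one => exact absurd h notMem_one
  | of_mul x xs ih =>
    by_cases hx : x = c
    · exact ⟨1, xs, by rw [hx, one_mul], notMem_one⟩
    · have hxs : c ∈ xs := (mem_mul.mp h).resolve_left fun h' => hx (mem_of.mp h').symm
      obtain ⟨u, t, rfl, hu⟩ := ih hxs
      refine ⟨of x * u, t, by simp only [mul_assoc], ?_⟩
      rw [mem_mul, mem_of, not_or]
      exact ⟨Ne.symm hx, hu⟩

theorem exists_eq_mul_of_mul_notMem_right {w : FreeMonoid α} (h : c ∈ w) :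
    ∃ s v, w = s * of c * v ∧ c ∉ v := by
  induction w using FreeMonoid.inductionOn' with
  | one => exact absurd h notMem_one
  | of_mul x xs ih =>
    by_cases hxs : c ∈ xs
    · obtain ⟨s, v, rfl, hv⟩ := ih hxs
      exact ⟨of x * s, v, by simp only [mul_assoc], hv⟩
    · have hx : x = c := (mem_of.mp ((mem_mul.mp h).resolve_right hxs)).symm
      exact ⟨1, xs, by rw [hx, one_mul], hxs⟩

/-- Cut a word containing `c` at the first and at the last occurrence of `c`. -/
theorem exists_eq_mul_mul_of_mem {w : FreeMonoid α} (h : c ∈ w) :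
    ∃ u m v, w = u * m * v ∧ c ∉ u ∧ c ∉ v ∧ (∃ x, m = of c * x) ∧ ∃ y, m = y * of c := by
  obtain ⟨u, t, rfl, hu⟩ := exists_eq_mul_of_mul_notMem_left h
  by_cases ht : c ∈ t
  · obtain ⟨s, v, rfl, hv⟩ := exists_eq_mul_of_mul_notMem_right ht
    exact ⟨u, of c * s * of c, v, by simp only [mul_assoc], hu, hv,
      ⟨s * of c, mul_assoc _ _ _⟩, ⟨of c * s, rfl⟩⟩
  · exact ⟨u, of c, t, rfl, hu, ht, ⟨1, (mul_one _).symm⟩, ⟨1, (one_mul _).symm⟩⟩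

end FreeMonoid

theorem preimage_factorization_general {A M : Type*} [Monoid M]
    (φ : FreeMonoid A →* M) (c : A) (p : M) :
    {w : FreeMonoid A | φ w = p} =
      {w : FreeMonoid A | (∀ a ∈ w, a ≠ c) ∧ φ w = p} ∪
      ⋃ (p₁ : M) (p₂ : M) (p₃ : M) (_ : p₁ * p₂ * p₃ = p),
        Lang.cat
          (Lang.cat {w : FreeMonoid A | (∀ a ∈ w, a ≠ c) ∧ φ w = p₁}
            ({w : FreeMonoid A | φ w = p₂} ∩ {w | ∃ u, w = FreeMonoid.of c * u} ∩
              {w | ∃ u, w = u * FreeMonoid.of c}))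
          {w : FreeMonoid A | (∀ a ∈ w, a ≠ c) ∧ φ w = p₃} := by
  have avoids {w : FreeMonoid A} (h : c ∉ w) : ∀ a ∈ w, a ≠ c := fun _ ha hac => h (hac ▸ ha)
  ext w
  simp only [Set.mem_ofPred_eq, Set.mem_union, Set.mem_iUnion]
  constructor
  · rintro rfl
    by_cases hc : c ∈ w
    · obtain ⟨u, m, v, rfl, hu, hv, hm_head, hm_last⟩ := FreeMonoid.exists_eq_mul_mul_of_mem hc
      refine .inr ⟨φ u, φ m, φ v, by simp only [map_mul], ?_⟩
      exact Lang.mul_mem_cat (Lang.mul_mem_cat ⟨avoids hu, rfl⟩ ⟨⟨rfl, hm_head⟩, hm_last⟩)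
        ⟨avoids hv, rfl⟩
    · exact .inl ⟨avoids hc, rfl⟩
  · rintro (⟨-, rfl⟩ | ⟨p₁, p₂, p₃, rfl, _, ⟨u, ⟨-, rfl⟩, m, ⟨⟨rfl, -⟩, -⟩, rfl⟩, v, ⟨-, rfl⟩, rfl⟩)
    · rfl
    · simp only [map_mul]

/-- Let `φ : A* → M` be a monoid homomorphism, `c ∈ A`, `B = A \ {c}`, and let `φ_c` be the
restriction of `φ` to `B*` (so `φ_c⁻¹(q)` is the set of words avoiding `c` that `φ` maps to
`q`, viewed as a language over `A`).  Then
`φ⁻¹(p) = φ_c⁻¹(p) ∪ ⋃_{p = p₁p₂p₃} φ_c⁻¹(p₁) · (φ⁻¹(p₂) ∩ cA* ∩ A*c) · φ_c⁻¹(p₃)`. -/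
theorem preimage_factorization {A M : Type*} [Finite A] [Monoid M]
    (φ : FreeMonoid A →* M) (c : A) (p : M) :
    {w : FreeMonoid A | φ w = p} =
      {w : FreeMonoid A | (∀ a ∈ w, a ≠ c) ∧ φ w = p} ∪
      ⋃ (p₁ : M) (p₂ : M) (p₃ : M) (_ : p₁ * p₂ * p₃ = p),
        Lang.cat
          (Lang.cat {w : FreeMonoid A | (∀ a ∈ w, a ≠ c) ∧ φ w = p₁}
            ({w : FreeMonoid A | φ w = p₂} ∩ {w | ∃ u, w = FreeMonoid.of c * u} ∩
              {w | ∃ u, w = u * FreeMonoid.of c}))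
          {w : FreeMonoid A | (∀ a ∈ w, a ≠ c) ∧ φ w = p₃} :=
  preimage_factorization_general φ c p
end

section
/- For every star-free language L ∈ SF(A*) over a finite alphabet A, there exists a natural number n such that for all words p, q, u ∈ A*: p u^n q ∈ L if and only if p u^{n+1} q ∈ L. -/
/-- The class `SF(A*)` of star-free languages over the alphabet `A`: the smallest class
containing `A*` and `{a}` for each letter `a`, closed under union, set difference and
concatenation. -/
inductive SF {A : Type*} : Set (FreeMonoid A) → Prop
  | full : SF Set.univ
  | letter (a : A) : SF {FreeMonoid.of a}
  | union {K K'} : SF K → SF K' → SF (K ∪ K')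
  | diff {K K'} : SF K → SF K' → SF (K \ K')
  | concat {K K'} : SF K → SF K' → SF (Lang.cat K K')

namespace FreeMonoid

variable {α : Type*}

theorem mul_eq_mul_iff {a b c d : FreeMonoid α} :
    a * b = c * d ↔ (∃ e, c = a * e ∧ b = e * d) ∨ ∃ e, a = c * e ∧ d = e * b :=
  List.append_eq_append_iff

theorem length_pow (u : FreeMonoid α) (m : ℕ) : (u ^ m).length = m * u.length := by
  induction m with
  | zero => simp
  | succ m ih => rw [pow_succ, length_mul, ih, Nat.succ_mul]

theorem le_length_mul_pow_mul {u : FreeMonoid α} (hu : u ≠ 1) (p q : FreeMonoid α) (m : ℕ) :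
    m ≤ (p * u ^ m * q).length := by
  have : 1 ≤ u.length := Nat.one_le_iff_ne_zero.mpr (mt length_eq_zero.mp hu)
  simp only [length_mul, length_pow]
  nlinarith

theorem mul_eq_pow_mul_cases {x y u q : FreeMonoid α} {N : ℕ} (h : x * y = u ^ N * q) :
    (∃ i j u₁ u₂, u = u₁ * u₂ ∧ i + 1 + j = N ∧ x = u ^ i * u₁ ∧ y = u₂ * u ^ j * q) ∨
      ∃ c, x = u ^ N * c ∧ q = c * y := by
  induction N generalizing x with
  | zero => exact .inr ⟨x, by simp, by simpa using h.symm⟩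
  | succ N ih =>
    rw [pow_succ', mul_assoc] at h
    rcases mul_eq_mul_iff.mp h with ⟨c, hu, hy⟩ | ⟨c, hx, hc⟩
    · exact .inl ⟨0, N, x, c, hu, by omega, by simp, by rw [hy, mul_assoc]⟩
    · rcases ih hc.symm with ⟨i, j, u₁, u₂, hu, hij, hc, hy⟩ | ⟨d, hc, hq⟩
      · exact .inl ⟨i + 1, j, u₁, u₂, hu, by omega, by rw [hx, hc, pow_succ', mul_assoc], hy⟩
      · exact .inr ⟨d, by rw [hx, hc, pow_succ', mul_assoc], hq⟩

end FreeMonoid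

section Aperiodic

open FreeMonoid

variable {A : Type*}

def IsAperiodicFrom (L : Set (FreeMonoid A)) (n : ℕ) : Prop :=
  ∀ p q u : FreeMonoid A, p * u ^ n * q ∈ L ↔ p * u ^ (n + 1) * q ∈ L

namespace IsAperiodicFrom

variable {L K K' : Set (FreeMonoid A)} {n n' : ℕ}

theorem succ (h : IsAperiodicFrom L n) : IsAperiodicFrom L (n + 1) := by
  intro p q u
  simpa only [pow_succ' u, ← mul_assoc] using h (p * u) q u

theorem mono (h : IsAperiodicFrom L n) {m : ℕ} (hnm : n ≤ m) : IsAperiodicFrom L m := by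
  induction m, hnm using Nat.le_induction with
  | base => exact h
  | succ m _ ih => exact ih.succ

theorem mem_iff (h : IsAperiodicFrom L n) {m k : ℕ} (hm : n ≤ m) (hk : n ≤ k)
    (p q u : FreeMonoid A) : p * u ^ m * q ∈ L ↔ p * u ^ k * q ∈ L := by
  wlog hmk : m ≤ k generalizing m k
  · exact (this hk hm (le_of_not_ge hmk)).symm
  induction k, hmk using Nat.le_induction with
  | base => rfl
  | succ k hmk ih => exact (ih (hm.trans hmk)).trans (h.mono (hm.trans hmk) p q u)

theorem union (hK : IsAperiodicFrom K n) (hK' : IsAperiodicFrom K' n') :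
    IsAperiodicFrom (K ∪ K') (max n n') := fun p q u => by
  simp only [Set.mem_union, hK.mono (le_max_left n n') p q u, hK'.mono (le_max_right n n') p q u]

theorem diff (hK : IsAperiodicFrom K n) (hK' : IsAperiodicFrom K' n') :
    IsAperiodicFrom (K \ K') (max n n') := fun p q u => by
  simp only [Set.mem_sdiff, hK.mono (le_max_left n n') p q u, hK'.mono (le_max_right n n') p q u]

theorem mem_cat_pow_of_mem_cat_pow (hK : IsAperiodicFrom K n) (hK' : IsAperiodicFrom K' n')
    {M M' : ℕ} (hM : n + n' + 1 ≤ M) (hM' : n + n' + 1 ≤ M') (hMM' : M' = M + 1 ∨ M = M' + 1)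
    {p q u : FreeMonoid A} (hmem : p * u ^ M * q ∈ Lang.cat K K') :
    p * u ^ M' * q ∈ Lang.cat K K' := by
  obtain ⟨x, hx, y, hy, hxy⟩ := hmem
  rcases mul_eq_mul_iff.mp (hxy.symm.trans (mul_assoc _ _ _)) with ⟨c, hpc, hcy⟩ | ⟨c, hxc, hcy⟩
  · subst hpc
    refine ⟨x, hx, c * u ^ M' * q, ?_, by simp only [mul_assoc]⟩
    refine (hK'.mem_iff (m := M) (by omega) (by omega) c q u).mp ?_
    simpa only [hcy, mul_assoc] using hy
  rcases mul_eq_pow_mul_cases hcy.symm with ⟨i, j, u₁, u₂, hu, hij, hc, hy'⟩ | ⟨c', hc, hq⟩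
  · subst hxc hc hy'
    obtain ⟨i', hij', hi, hi'⟩ | ⟨j', hij', hj, hj'⟩ :
        (∃ i', i' + 1 + j = M' ∧ n ≤ i ∧ n ≤ i') ∨ ∃ j', i + 1 + j' = M' ∧ n' ≤ j ∧ n' ≤ j' := by
      by_cases hi : n + 1 ≤ i
      · rcases hMM' with rfl | rfl
        exacts [.inl ⟨i + 1, by omega, by omega, by omega⟩,
          .inl ⟨i - 1, by omega, by omega, by omega⟩]
      · rcases hMM' with rfl | rfl
        exacts [.inr ⟨j + 1, by omega, by omega, by omega⟩,
          .inr ⟨j - 1, by omega, by omega, by omega⟩]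
    · have hx' := (hK.mem_iff hi hi' p u₁ u).mp (by simpa only [mul_assoc] using hx)
      refine ⟨p * u ^ i' * u₁, hx', u₂ * u ^ j * q, hy, ?_⟩
      rw [← hij', pow_add, pow_succ, hu]
      simp only [mul_assoc]
    · refine ⟨p * (u ^ i * u₁), hx, u₂ * u ^ j' * q, (hK'.mem_iff hj hj' u₂ q u).mp hy, ?_⟩
      rw [← hij', pow_add, pow_succ, hu]
      simp only [mul_assoc]
  · subst hxc hc hq
    refine ⟨p * u ^ M' * c', ?_, y, hy, by simp only [mul_assoc]⟩
    exact (hK.mem_iff (m := M) (by omega) (by omega) p c' u).mp (by simpa only [mul_assoc] using hx)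

theorem cat (hK : IsAperiodicFrom K n) (hK' : IsAperiodicFrom K' n') :
    IsAperiodicFrom (Lang.cat K K') (n + n' + 1) := fun _ _ _ =>
  ⟨hK.mem_cat_pow_of_mem_cat_pow hK' le_rfl (by omega) (.inl rfl),
    hK.mem_cat_pow_of_mem_cat_pow hK' (by omega) le_rfl (.inr rfl)⟩

end IsAperiodicFrom

theorem isAperiodicFrom_univ (n : ℕ) : IsAperiodicFrom (Set.univ : Set (FreeMonoid A)) n :=
  fun _ _ _ => Iff.rfl

theorem isAperiodicFrom_singleton (w : FreeMonoid A) : IsAperiodicFrom {w} (w.length + 1) := by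
  intro p q u
  rcases eq_or_ne u 1 with rfl | hu
  · simp only [one_pow]
  have not_mem {m : ℕ} (hm : w.length < m) : p * u ^ m * q ∉ ({w} : Set (FreeMonoid A)) :=
    fun h => (le_length_mul_pow_mul hu p q m).not_gt (by rwa [Set.mem_singleton_iff.mp h])
  exact iff_of_false (not_mem (by omega)) (not_mem (by omega))

end Aperiodic

theorem starfree_aperiodicity_general {A : Type*} (L : Set (FreeMonoid A))
    (hL : SF L) :
    ∃ n : ℕ, ∀ p q u : FreeMonoid A, p * u ^ n * q ∈ L ↔ p * u ^ (n + 1) * q ∈ L := by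
  induction hL with
  | full => exact ⟨0, isAperiodicFrom_univ 0⟩
  | letter a => exact ⟨_, isAperiodicFrom_singleton (FreeMonoid.of a)⟩
  | union _ _ ihK ihK' =>
    exact ihK.elim fun _ hK => ihK'.elim fun _ hK' => ⟨_, IsAperiodicFrom.union hK hK'⟩
  | diff _ _ ihK ihK' =>
    exact ihK.elim fun _ hK => ihK'.elim fun _ hK' => ⟨_, IsAperiodicFrom.diff hK hK'⟩
  | concat _ _ ihK ihK' =>
    exact ihK.elim fun _ hK => ihK'.elim fun _ hK' => ⟨_, IsAperiodicFrom.cat hK hK'⟩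

/-- For every star-free language `L ∈ SF(A*)` there is an `n ∈ ℕ` such that for all
words `p, q, u ∈ A*`:  `p uⁿ q ∈ L ↔ p u^{n+1} q ∈ L`. -/
theorem starfree_aperiodicity {A : Type*} [Finite A] (L : Set (FreeMonoid A))
    (hL : SF L) :
    ∃ n : ℕ, ∀ p q u : FreeMonoid A, p * u ^ n * q ∈ L ↔ p * u ^ (n + 1) * q ∈ L :=
  starfree_aperiodicity_general L hL
end

section
/- Let A be a finite alphabet, let K, K' ⊆ A*, and let n, m be natural numbers such that for all p, q, u ∈ A*: (p u^n q ∈ K ⇔ p u^{n+1} q ∈ K) and (p u^m q ∈ K' ⇔ p u^{m+1} q ∈ K'). Then for all p, q, u ∈ A*: p u^{n+m+1} q ∈ K · K' if and only if p u^{n+m+2} q ∈ K · K'. -/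
namespace FreeMonoid

variable {α : Type*}

theorem mul_eq_mul_iff_exists {s t x y : FreeMonoid α} :
    s * t = x * y ↔ (∃ r, x = s * r ∧ t = r * y) ∨ (∃ r, s = x * r ∧ y = r * t) :=
  List.append_eq_append_iff

theorem exists_eq_pow_mul_of_mul_eq_pow_succ {s t u : FreeMonoid α} {k : ℕ}
    (h : s * t = u ^ (k + 1)) :
    ∃ i j a b, i + j = k ∧ a * b = u ∧ s = u ^ i * a ∧ t = b * u ^ j := by
  induction k generalizing s with
  | zero => exact ⟨0, 0, s, t, rfl, by simpa using h, by simp, by simp⟩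
  | succ k ih =>
    rcases mul_eq_mul_iff_exists.mp (h.trans (pow_succ' u (k + 1))) with
      ⟨r, rfl, rfl⟩ | ⟨r, rfl, hr⟩
    · exact ⟨0, k + 1, s, r, by omega, rfl, by simp, rfl⟩
    · obtain ⟨i, j, a, b, hij, hab, rfl, rfl⟩ := ih hr.symm
      exact ⟨i + 1, j, a, b, by omega, hab, by rw [pow_succ', mul_assoc], rfl⟩

theorem mul_eq_mul_pow_succ_mul {v w p q u : FreeMonoid α} {k : ℕ}
    (h : v * w = p * u ^ (k + 1) * q) :
    (∃ r, p = v * r ∧ w = r * u ^ (k + 1) * q) ∨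
    (∃ i j a b, i + j = k ∧ a * b = u ∧ v = p * u ^ i * a ∧ w = b * u ^ j * q) ∨
    (∃ s, q = s * w ∧ v = p * u ^ (k + 1) * s) := by
  rw [mul_assoc] at h
  rcases mul_eq_mul_iff_exists.mp h with ⟨r, hp, rfl⟩ | ⟨r, rfl, hr⟩
  · exact Or.inl ⟨r, hp, by rw [mul_assoc]⟩
  rcases mul_eq_mul_iff_exists.mp hr.symm with ⟨s, hs, rfl⟩ | ⟨s, rfl, rfl⟩
  · obtain ⟨i, j, a, b, hij, hab, rfl, rfl⟩ := exists_eq_pow_mul_of_mul_eq_pow_succ hs.symm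
    exact Or.inr <| Or.inl ⟨i, j, a, b, hij, hab, by rw [mul_assoc], by rw [mul_assoc]⟩
  · exact Or.inr <| Or.inr ⟨s, rfl, by rw [mul_assoc]⟩

end FreeMonoid

theorem mul_pow_mul_mul_mul_pow_mul {M : Type*} [Monoid M] {p q u a b : M} {i j k : ℕ}
    (hab : a * b = u) (hk : i + j + 1 = k) :
    p * u ^ i * a * (b * u ^ j * q) = p * u ^ k * q := by
  rw [← hk, add_right_comm, pow_add, pow_succ, ← hab]
  simp only [mul_assoc]

namespace Lang

variable {α : Type*}

def IsAperiodic (n : ℕ) (K : Set (FreeMonoid α)) : Prop :=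
  ∀ p q u : FreeMonoid α, p * u ^ n * q ∈ K ↔ p * u ^ (n + 1) * q ∈ K

variable {n m k : ℕ} {K K' : Set (FreeMonoid α)}

theorem IsAperiodic.mono (hK : IsAperiodic n K) (hnk : n ≤ k) : IsAperiodic k K := by
  obtain ⟨j, rfl⟩ := Nat.exists_eq_add_of_le hnk
  intro p q u
  rw [add_comm n j, add_assoc, pow_add, pow_add, ← mul_assoc, ← mul_assoc]
  exact hK _ q u

theorem IsAperiodic.mem_cat_pow_succ (hK : IsAperiodic n K) (hK' : IsAperiodic m K')
    {p q u : FreeMonoid α} (h : p * u ^ (n + m + 1) * q ∈ cat K K') :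
    p * u ^ (n + m + 2) * q ∈ cat K K' := by
  obtain ⟨v, hv, w, hw, hvw⟩ := h
  rcases FreeMonoid.mul_eq_mul_pow_succ_mul hvw.symm with
    ⟨r, rfl, rfl⟩ | ⟨i, j, a, b, hij, hab, rfl, rfl⟩ | ⟨s, rfl, rfl⟩
  · exact ⟨v, hv, _, (hK'.mono (by omega) r q u).mp hw, by simp only [mul_assoc]⟩
  · rcases le_or_gt n i with hi | hi
    · exact ⟨_, (hK.mono hi p a u).mp hv, _, hw,
        (mul_pow_mul_mul_mul_pow_mul hab (by omega)).symm⟩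
    · exact ⟨_, hv, _, (hK'.mono (by omega) b q u).mp hw,
        (mul_pow_mul_mul_mul_pow_mul hab (by omega)).symm⟩
  · exact ⟨_, (hK.mono (by omega) p s u).mp hv, w, hw, by simp only [mul_assoc]⟩

theorem IsAperiodic.mem_cat_of_pow_succ (hK : IsAperiodic n K) (hK' : IsAperiodic m K')
    {p q u : FreeMonoid α} (h : p * u ^ (n + m + 2) * q ∈ cat K K') :
    p * u ^ (n + m + 1) * q ∈ cat K K' := by
  obtain ⟨v, hv, w, hw, hvw⟩ := h
  rcases FreeMonoid.mul_eq_mul_pow_succ_mul (k := n + m + 1) hvw.symm with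
    ⟨r, rfl, rfl⟩ | ⟨i, j, a, b, hij, hab, rfl, rfl⟩ | ⟨s, rfl, rfl⟩
  · exact ⟨v, hv, _, (hK'.mono (by omega) r q u).mpr hw, by simp only [mul_assoc]⟩
  · rcases le_or_gt (n + 1) i with hi | hi
    · obtain ⟨i, rfl⟩ := Nat.exists_eq_add_one.mpr (by omega : 0 < i)
      exact ⟨_, (hK.mono (by omega) p a u).mpr hv, _, hw,
        (mul_pow_mul_mul_mul_pow_mul hab (by omega)).symm⟩
    · obtain ⟨j, rfl⟩ := Nat.exists_eq_add_one.mpr (by omega : 0 < j)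
      exact ⟨_, hv, _, (hK'.mono (by omega) b q u).mpr hw,
        (mul_pow_mul_mul_mul_pow_mul hab (by omega)).symm⟩
  · exact ⟨_, (hK.mono (by omega) p s u).mpr hv, w, hw, by simp only [mul_assoc]⟩

theorem IsAperiodic.cat (hK : IsAperiodic n K) (hK' : IsAperiodic m K') :
    IsAperiodic (n + m + 1) (cat K K') := fun _ _ _ =>
  ⟨hK.mem_cat_pow_succ hK', hK.mem_cat_of_pow_succ hK'⟩

end Lang

theorem cat_aperiodicity_general {A : Type*} (K K' : Set (FreeMonoid A)) (n m : ℕ)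
    (hK : ∀ p q u : FreeMonoid A, p * u ^ n * q ∈ K ↔ p * u ^ (n + 1) * q ∈ K)
    (hK' : ∀ p q u : FreeMonoid A, p * u ^ m * q ∈ K' ↔ p * u ^ (m + 1) * q ∈ K') :
    ∀ p q u : FreeMonoid A,
      p * u ^ (n + m + 1) * q ∈ Lang.cat K K' ↔
      p * u ^ (n + m + 2) * q ∈ Lang.cat K K' :=
  Lang.IsAperiodic.cat hK hK'

/-- If `n` works for `K` and `m` works for `K'` (in the sense that
`p uⁿ q ∈ K ↔ p u^{n+1} q ∈ K` and similarly for `K'` with `m`), then `n + m + 1` works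
for the concatenation `K · K'`. -/
theorem cat_aperiodicity {A : Type*} [Finite A] (K K' : Set (FreeMonoid A)) (n m : ℕ)
    (hK : ∀ p q u : FreeMonoid A, p * u ^ n * q ∈ K ↔ p * u ^ (n + 1) * q ∈ K)
    (hK' : ∀ p q u : FreeMonoid A, p * u ^ m * q ∈ K' ↔ p * u ^ (m + 1) * q ∈ K') :
    ∀ p q u : FreeMonoid A,
      p * u ^ (n + m + 1) * q ∈ Lang.cat K K' ↔
      p * u ^ (n + m + 2) * q ∈ Lang.cat K K' :=
  cat_aperiodicity_general K K' n m hK hK'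
end
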